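/- For every integer n ≥ 1, the function F(z) = ∫_{-∞}^{∞} e^{-t^{2n}} e^{izt} dt satisfies the differential equation F^{(2n-1)}(z) = ((-1)^n / (2n)) · z · F(z) for all complex z, where F^{(2n-1)} denotes the (2n-1)-th derivative. -/

import Mathlib

open Complex MeasureTheory

noncomputable def F (n : ℕ) (z : ℂ) : ℂ :=
  ∫ t : ℝ, (Real.exp (-(t ^ (2 * n))) : ℂ) * Complex.exp (Complex.I * z * t)

/-!
Differentiating under the integral sign, `F⁽ᵏ⁾(z) = iᵏ ∫ tᵏ e^{-t^{2n}} e^{izt} dt`, which is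
legitimate because `e^{-t^{2n}}` kills every `|t|ᵏ e^{c|t|}`. For `k = 2n - 1`, the factor
`t^{2n-1} e^{-t^{2n}}` is `-(2n)⁻¹ d/dt e^{-t^{2n}}`, and one integration by parts moves the
derivative onto `e^{izt}`, producing `iz F(z) / (2n)`. Finally `i^{2n} = (-1)ⁿ`.
-/

open Filter Metric

noncomputable def fourierMoment (w : ℝ → ℂ) (k : ℕ) (z : ℂ) : ℂ :=
  ∫ t : ℝ, (t : ℂ) ^ k * w t * cexp (I * z * t)

def HasIntegrableExpMoments (w : ℝ → ℂ) : Prop :=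
  ∀ (k : ℕ) (c : ℝ), Integrable fun t : ℝ => |t| ^ k * Real.exp (c * |t|) * ‖w t‖

lemma norm_cexp_I_mul_mul_ofReal_le (z : ℂ) (t : ℝ) :
    ‖cexp (I * z * t)‖ ≤ Real.exp (‖z‖ * |t|) := by
  simpa [norm_mul] using norm_exp_le_exp_norm (I * z * t)

section FourierMoment

variable {w : ℝ → ℂ}

lemma aestronglyMeasurable_fourierMoment_integrand (hw_meas : AEStronglyMeasurable w)
    (k : ℕ) (z : ℂ) :
    AEStronglyMeasurable fun t : ℝ => (t : ℂ) ^ k * w t * cexp (I * z * t) :=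
  ((continuous_ofReal.pow k).aestronglyMeasurable.mul hw_meas).mul
    (by fun_prop : Continuous fun t : ℝ => cexp (I * z * t)).aestronglyMeasurable

lemma norm_fourierMoment_integrand_le (k : ℕ) {z : ℂ} {R : ℝ} (hz : ‖z‖ ≤ R) (t : ℝ) :
    ‖(t : ℂ) ^ k * w t * cexp (I * z * t)‖ ≤ |t| ^ k * Real.exp (R * |t|) * ‖w t‖ := by
  have hexp : ‖cexp (I * z * t)‖ ≤ Real.exp (R * |t|) :=
    (norm_cexp_I_mul_mul_ofReal_le z t).trans
      (Real.exp_le_exp.2 (mul_le_mul_of_nonneg_right hz (abs_nonneg t)))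
  rw [norm_mul, norm_mul, norm_pow, norm_real, Real.norm_eq_abs]
  calc |t| ^ k * ‖w t‖ * ‖cexp (I * z * t)‖ ≤ |t| ^ k * ‖w t‖ * Real.exp (R * |t|) := by
        gcongr
    _ = |t| ^ k * Real.exp (R * |t|) * ‖w t‖ := by ring

lemma integrable_fourierMoment_integrand (hw_meas : AEStronglyMeasurable w) (hw : HasIntegrableExpMoments w)
    (k : ℕ) (z : ℂ) :
    Integrable fun t : ℝ => (t : ℂ) ^ k * w t * cexp (I * z * t) :=
  (hw k ‖z‖).mono' (aestronglyMeasurable_fourierMoment_integrand hw_meas k z)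
    (ae_of_all _ (norm_fourierMoment_integrand_le k le_rfl))

lemma hasDerivAt_fourierMoment (hw_meas : AEStronglyMeasurable w) (hw : HasIntegrableExpMoments w)
    (k : ℕ) (z₀ : ℂ) :
    HasDerivAt (fourierMoment w k) (I * fourierMoment w (k + 1) z₀) z₀ := by
  have hderiv (t : ℝ) (z : ℂ) : HasDerivAt (fun z => (t : ℂ) ^ k * w t * cexp (I * z * t))
      (I * ((t : ℂ) ^ (k + 1) * w t * cexp (I * z * t))) z := by
    refine ((((hasDerivAt_id' z).const_mul I).mul_const (t : ℂ)).cexp.const_mul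
      ((t : ℂ) ^ k * w t)).congr_deriv ?_
    ring
  have hbound : ∀ᵐ t : ℝ, ∀ z ∈ ball z₀ 1,
      ‖I * ((t : ℂ) ^ (k + 1) * w t * cexp (I * z * t))‖
        ≤ |t| ^ (k + 1) * Real.exp ((‖z₀‖ + 1) * |t|) * ‖w t‖ := by
    refine ae_of_all _ fun t z hz => ?_
    rw [norm_mul, norm_I, one_mul]
    refine norm_fourierMoment_integrand_le (k + 1) ?_ t
    linarith [norm_le_norm_add_norm_sub' z z₀, mem_ball_iff_norm.1 hz]
  have h := (hasDerivAt_integral_of_dominated_loc_of_deriv_le (ball_mem_nhds z₀ one_pos)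
    (Eventually.of_forall (aestronglyMeasurable_fourierMoment_integrand hw_meas k))
    (integrable_fourierMoment_integrand hw_meas hw k z₀)
    ((aestronglyMeasurable_fourierMoment_integrand hw_meas (k + 1) z₀).const_mul I)
    hbound (hw (k + 1) (‖z₀‖ + 1)) (ae_of_all _ fun t z _ => hderiv t z)).2
  rwa [integral_const_mul] at h

lemma iteratedDeriv_fourierMoment_zero (hw_meas : AEStronglyMeasurable w) (hw : HasIntegrableExpMoments w)
    (k : ℕ) :
    iteratedDeriv k (fourierMoment w 0) = fun z => I ^ k * fourierMoment w k z := by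
  induction k with
  | zero => simp
  | succ k ih =>
    funext z
    rw [iteratedDeriv_succ, ih, ((hasDerivAt_fourierMoment hw_meas hw k z).const_mul _).deriv,
      pow_succ, mul_assoc]

end FourierMoment

noncomputable def expNegPow (n : ℕ) (t : ℝ) : ℂ := Real.exp (-(t ^ (2 * n)))

lemma norm_expNegPow (n : ℕ) (t : ℝ) : ‖expNegPow n t‖ = Real.exp (-t ^ (2 * n)) := by
  rw [expNegPow, norm_real, Real.norm_of_nonneg (Real.exp_pos _).le]

lemma continuous_expNegPow (n : ℕ) : Continuous (expNegPow n) := by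
  unfold expNegPow
  fun_prop

lemma hasDerivAt_expNegPow (n : ℕ) (t : ℝ) :
    HasDerivAt (expNegPow n) (-(2 * n) * t ^ (2 * n - 1) * expNegPow n t) t := by
  refine ((hasDerivAt_pow (2 * n) t).neg.exp.ofReal_comp).congr_deriv ?_
  simp only [expNegPow, Pi.neg_apply]
  push_cast
  ring

lemma fourierMoment_expNegPow_zero (n : ℕ) : fourierMoment (expNegPow n) 0 = F n := by
  funext z
  simp [fourierMoment, expNegPow, F]

lemma hasIntegrableExpMoments_expNegPow {n : ℕ} (hn : 1 ≤ n) :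
    HasIntegrableExpMoments (expNegPow n) := by
  intro k c
  simp only [norm_expNegPow]
  have hgauss : Integrable fun t : ℝ => |t| ^ k * Real.exp (-(1 / 2) * t ^ 2) := by
    have h := (integrable_rpow_mul_exp_neg_mul_sq (by norm_num : (0 : ℝ) < 1 / 2)
      (s := k) (by linarith [(Nat.cast_nonneg k : (0 : ℝ) ≤ k)])).abs
    simpa [abs_mul, abs_pow, abs_of_nonneg (Real.exp_pos _).le] using h
  -- `c|t| ≤ c²/2 + t²/2` and `t² ≤ t^{2n} + 1` bound the integrand by `e^{1 + c²/2} |t|ᵏ e^{-t²/2}`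
  refine (hgauss.const_mul (Real.exp (1 + c ^ 2 / 2))).mono'
    (by fun_prop : Continuous _).aestronglyMeasurable (ae_of_all _ fun t => ?_)
  have hsq : t ^ 2 ≤ t ^ (2 * n) + 1 := by
    rw [pow_mul]
    rcases le_or_gt (t ^ 2) 1 with h | h
    · linarith [pow_nonneg (sq_nonneg t) n]
    · linarith [le_self_pow₀ h.le (by omega : n ≠ 0)]
  have hexp : c * |t| + -t ^ (2 * n) ≤ (1 + c ^ 2 / 2) + -(1 / 2) * t ^ 2 := by
    nlinarith [sq_nonneg (c - |t|), sq_abs t]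
  rw [Real.norm_eq_abs, abs_of_nonneg (by positivity), mul_assoc, ← Real.exp_add,
    mul_left_comm, ← Real.exp_add]
  gcongr

lemma fourierMoment_expNegPow_two_mul_sub_one {n : ℕ} (hn : 1 ≤ n) (z : ℂ) :
    fourierMoment (expNegPow n) (2 * n - 1) z = I * z / (2 * n) * F n z := by
  have hint := integrable_fourierMoment_integrand (continuous_expNegPow n).aestronglyMeasurable
    (hasIntegrableExpMoments_expNegPow hn)
  have hv (t : ℝ) : HasDerivAt (fun t : ℝ => cexp (I * z * t)) (cexp (I * z * t) * (I * z)) t := by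
    refine (((hasDerivAt_id' t).ofReal_comp.const_mul (I * z)).cexp).congr_deriv ?_
    rw [ofReal_one, mul_one]
  have hibp := integral_mul_deriv_eq_deriv_mul_of_integrable (fun t _ => hasDerivAt_expNegPow n t)
    (fun t _ => hv t) (((hint 0 z).const_mul (I * z)).congr (ae_of_all _ fun t => by
      simp only [Pi.mul_apply]; ring))
    (((hint (2 * n - 1) z).const_mul (-(2 * n))).congr (ae_of_all _ fun t => by
      simp only [Pi.mul_apply]; ring))
    ((hint 0 z).congr (ae_of_all _ fun t => by simp))
  have hv' : (fun t : ℝ => expNegPow n t * (cexp (I * z * t) * (I * z)))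
      = fun t : ℝ => I * z * ((t : ℂ) ^ 0 * expNegPow n t * cexp (I * z * t)) := by
    funext t; ring
  have hu' : (fun t : ℝ => -(2 * n) * (t : ℂ) ^ (2 * n - 1) * expNegPow n t * cexp (I * z * t))
      = fun t : ℝ => -(2 * n) * ((t : ℂ) ^ (2 * n - 1) * expNegPow n t * cexp (I * z * t)) := by
    funext t; ring
  rw [hv', hu', integral_const_mul, integral_const_mul] at hibp
  change I * z * fourierMoment (expNegPow n) 0 z
    = -(-(2 * n) * fourierMoment (expNegPow n) (2 * n - 1) z) at hibp
  rw [fourierMoment_expNegPow_zero] at hibp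
  have hn0 : (2 * n : ℂ) ≠ 0 := by exact_mod_cast (by omega : 2 * n ≠ 0)
  rw [div_mul_eq_mul_div, eq_div_iff hn0]
  linear_combination -hibp

theorem F_ode (n : ℕ) (hn : 1 ≤ n) (z : ℂ) :
    iteratedDeriv (2 * n - 1) (F n) z = ((-1) ^ n / (2 * n : ℂ)) * z * F n z := by
  have hderiv := iteratedDeriv_fourierMoment_zero (continuous_expNegPow n).aestronglyMeasurable
    (hasIntegrableExpMoments_expNegPow hn) (2 * n - 1)
  rw [fourierMoment_expNegPow_zero] at hderiv
  have hI : I ^ (2 * n - 1) * I = (-1) ^ n := by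
    rw [← pow_succ, Nat.sub_add_cancel (by omega), pow_mul, I_sq]
  rw [hderiv]
  dsimp only
  rw [fourierMoment_expNegPow_two_mul_sub_one hn, ← hI]
  ring
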